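/- Let n ≥ 2. There exist constants C, c > 0, depending only on n, such that for every X' ∈ ℝ^{n-1} with 1/2 ≤ |X'| ≤ 5/2 and every τ with 0 < τ ≤ 1, one has ∫_{D₃} e^{-|X'-z'|²/τ} (|z₁|/|z'|ⁿ) dz' ≤ C e^{-c/τ}, where D₃ = {z' ∈ ℝ^{n-1} : |z'| > |X'|/10 and |z' - X'| > |X'|/10}. -/

import Mathlib

/-!
On `D₃` both `|z'|` and `|z' - X'|` are at least `|X'|/10 ≥ 1/20`. The first bound makes the
kernel `|z₁|/|z'|ⁿ ≤ |z'|^{1-n}` at most `20^{n-1}`; the second lets one split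
`e^{-|X'-z'|²/τ} ≤ e^{-1/(800τ)} e^{-|z'-X'|²/2}` (half of the exponent is spent on the
factor `e^{-c/τ}`, the other half, using `τ ≤ 1`, on a Gaussian). The integral is then at most
`20^{n-1} e^{-1/(800τ)}` times the full Gaussian integral.
-/

open MeasureTheory Real Set

section Gaussian

variable {V : Type*} [NormedAddCommGroup V] [InnerProductSpace ℝ V] [FiniteDimensional ℝ V]
  [MeasurableSpace V] [BorelSpace V]

lemma integral_rexp_neg_mul_sq_norm_pos {b : ℝ} (hb : 0 < b) :
    0 < ∫ v : V, rexp (-b * ‖v‖ ^ 2) := by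
  rw [GaussianFourier.integral_rexp_neg_mul_sq_norm hb]
  positivity

lemma integrable_rexp_neg_mul_sq_norm {b : ℝ} (hb : 0 < b) :
    Integrable (fun v : V => rexp (-b * ‖v‖ ^ 2)) :=
  Integrable.of_integral_ne_zero (integral_rexp_neg_mul_sq_norm_pos hb).ne'

end Gaussian

lemma integrableOn_and_setIntegral_le_integral_of_norm_le {α : Type*} [MeasurableSpace α]
    {μ : Measure α} {f g : α → ℝ} {s : Set α} (hs : MeasurableSet s)
    (hf : AEStronglyMeasurable f (μ.restrict s)) (hg : Integrable g μ) (hg0 : 0 ≤ g)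
    (hfg : ∀ x ∈ s, ‖f x‖ ≤ g x) :
    IntegrableOn f s μ ∧ ∫ x in s, f x ∂μ ≤ ∫ x, g x ∂μ := by
  have hint : IntegrableOn f s μ :=
    hg.integrableOn.mono' hf ((ae_restrict_iff' hs).2 (ae_of_all _ hfg))
  refine ⟨hint, ?_⟩
  calc ∫ x in s, f x ∂μ ≤ ∫ x in s, g x ∂μ :=
        setIntegral_mono_on hint hg.integrableOn hs fun x hx => (le_abs_self _).trans (hfg x hx)
    _ ≤ ∫ x, g x ∂μ := setIntegral_le_integral hg (ae_of_all _ hg0)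

lemma abs_apply_div_norm_pow_le {ι : Type*} [Fintype ι] (z : EuclideanSpace ℝ ι) (i : ι)
    {δ : ℝ} (hδ : 0 < δ) (hz : δ ≤ ‖z‖) {n : ℕ} (hn : 1 ≤ n) :
    |z i| / ‖z‖ ^ n ≤ δ⁻¹ ^ (n - 1) := by
  have hz0 : 0 < ‖z‖ := hδ.trans_le hz
  calc |z i| / ‖z‖ ^ n ≤ ‖z‖ / ‖z‖ ^ n := by gcongr; exact PiLp.norm_apply_le z i
    _ = ‖z‖⁻¹ ^ (n - 1) := by
        rw [← Nat.sub_add_cancel hn, pow_succ, Nat.add_sub_cancel, inv_pow]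
        field_simp
    _ ≤ δ⁻¹ ^ (n - 1) := by gcongr

lemma rexp_neg_div_le_mul_rexp {r ρ τ : ℝ} (hr : 0 ≤ r) (hρ : ρ ≤ r) (hτ : 0 < τ)
    (hτ1 : τ ≤ 1) : rexp (-r / τ) ≤ rexp (-(ρ / 2) / τ) * rexp (-(1 / 2) * r) := by
  rw [← Real.exp_add, Real.exp_le_exp]
  have hρτ : ρ / 2 / τ ≤ r / 2 / τ := by gcongr
  have hrτ : r / 2 ≤ r / 2 / τ := le_div_self (by positivity) hτ hτ1
  have hsplit : -r / τ = -(r / 2 / τ) - r / 2 / τ := by ring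
  rw [hsplit, neg_div]
  linarith

lemma rexp_mul_abs_apply_div_norm_pow_le {ι : Type*} [Fintype ι] (X z : EuclideanSpace ℝ ι)
    (i : ι) {δ τ : ℝ} (hδ : 0 < δ) (hz : δ ≤ ‖z‖) (hzX : δ ≤ ‖z - X‖) (hτ : 0 < τ)
    (hτ1 : τ ≤ 1) {n : ℕ} (hn : 1 ≤ n) :
    rexp (-‖X - z‖ ^ 2 / τ) * (|z i| / ‖z‖ ^ n) ≤
      δ⁻¹ ^ (n - 1) * rexp (-(δ ^ 2 / 2) / τ) * rexp (-(1 / 2) * ‖z - X‖ ^ 2) := by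
  rw [norm_sub_rev X z, mul_comm (δ⁻¹ ^ (n - 1)), mul_assoc, mul_comm (δ⁻¹ ^ (n - 1)),
    ← mul_assoc]
  exact mul_le_mul
    (rexp_neg_div_le_mul_rexp (by positivity) (by gcongr) hτ hτ1)
    (abs_apply_div_norm_pow_le z i hδ hz hn) (by positivity) (by positivity)

/-- Estimate of `J₃`: for `1/2 ≤ |X'| ≤ 5/2` and `0 < τ ≤ 1`,
`∫_{D₃} e^{-|X'-z'|²/τ} |z₁|/|z'|ⁿ dz' ≤ C e^{-c/τ}`, where
`D₃ = {z' : |z'| > |X'|/10, |z' - X'| > |X'|/10}`. -/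
theorem stmt_6 (n : ℕ) (hn : 2 ≤ n) :
    ∃ C c : ℝ, 0 < C ∧ 0 < c ∧
      ∀ X' : EuclideanSpace ℝ (Fin (n-1)), 1/2 ≤ ‖X'‖ → ‖X'‖ ≤ 5/2 →
        ∀ τ : ℝ, 0 < τ → τ ≤ 1 →
          IntegrableOn
            (fun z' : EuclideanSpace ℝ (Fin (n-1)) =>
              Real.exp (-‖X' - z'‖^2/τ) * (|z' ⟨0, by omega⟩| / ‖z'‖^n))
            {z' : EuclideanSpace ℝ (Fin (n-1)) |
              ‖X'‖/10 < ‖z'‖ ∧ ‖X'‖/10 < ‖z' - X'‖} volume ∧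
          (∫ z' in {z' : EuclideanSpace ℝ (Fin (n-1)) |
                ‖X'‖/10 < ‖z'‖ ∧ ‖X'‖/10 < ‖z' - X'‖},
              Real.exp (-‖X' - z'‖^2/τ) * (|z' ⟨0, by omega⟩| / ‖z'‖^n)) ≤
            C * Real.exp (-c/τ) := by
  set K := ∫ v : EuclideanSpace ℝ (Fin (n-1)), rexp (-(1 / 2) * ‖v‖ ^ 2)
  have hK : 0 < K := integral_rexp_neg_mul_sq_norm_pos (by norm_num)
  refine ⟨(1 / 20)⁻¹ ^ (n - 1) * K, (1 / 20) ^ 2 / 2, by positivity, by positivity,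
    fun X' hX _ τ hτ hτ1 => ?_⟩
  have hgauss := ((integrable_rexp_neg_mul_sq_norm (V := EuclideanSpace ℝ (Fin (n-1)))
    (b := 1 / 2) (by norm_num)).comp_sub_right X').const_mul
    ((1 / 20 : ℝ)⁻¹ ^ (n - 1) * rexp (-((1 / 20) ^ 2 / 2) / τ))
  have hD : MeasurableSet {z' : EuclideanSpace ℝ (Fin (n-1)) |
      ‖X'‖/10 < ‖z'‖ ∧ ‖X'‖/10 < ‖z' - X'‖} :=
    (measurableSet_lt measurable_const measurable_norm).inter
      (measurableSet_lt measurable_const (measurable_id.sub_const X').norm)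
  refine (integrableOn_and_setIntegral_le_integral_of_norm_le hD (by fun_prop) hgauss
    (fun z => by positivity) fun z ⟨hz, hzX⟩ => ?_).imp_right (·.trans_eq ?_)
  · rw [Real.norm_of_nonneg (by positivity)]
    exact rexp_mul_abs_apply_div_norm_pow_le X' z _ (by norm_num) (by linarith) (by linarith)
      hτ hτ1 (by omega)
  · rw [integral_const_mul, integral_sub_right_eq_self (fun v => rexp (-(1 / 2) * ‖v‖ ^ 2)) X']
    ring
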